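/- arXiv:2401.14668 — 2 statements merged into one kernel-verified Lean document; each statement's English description precedes it below -/
import Mathlib

section
/- If α is a strict partition of n (i.e., α₁ > α₂ > ⋯ > α_ℓ > 0 with ∑ α_i = n), then ∑_{i=1}^{ℓ} C(α_i, 2) ≥ ∑_{i=1}^{ℓ} (i−1)α_i; that is, the Dyck path p_{n,α} has area at least equal to its bounce. -/
lemma sum_lt_choose (β : List ℕ) (hs : β.Pairwise (· > ·)) (hp : ∀ x ∈ β, 0 < x) :
    ∀ a, (∀ x ∈ β, x < a) → β.sum ≤ a.choose 2 := by
  induction β with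
  | nil => intro a _; simp
  | cons b γ ih =>
    intro a hlt
    have hb : b < a := hlt b (by simp)
    have hγ : γ.sum ≤ b.choose 2 := by
      refine ih hs.of_cons (fun x hx => hp x (List.mem_cons_of_mem _ hx)) b ?_
      intro x hx
      exact List.rel_of_pairwise_cons hs hx
    have : b + b.choose 2 ≤ a.choose 2 := by
      have : b + b.choose 2 = (b + 1).choose 2 := by
        rw [Nat.choose_two_right, Nat.choose_two_right]
        rcases b with _ | b
        · simp
        · simp [Nat.succ_sub_one]
          ring_nf
          omega
      rw [this]
      exact Nat.choose_le_choose 2 hb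
    calc (b :: γ).sum = b + γ.sum := by simp
      _ ≤ b + b.choose 2 := by omega
      _ ≤ a.choose 2 := this

lemma sum_getD (β : List ℕ) : ∑ i ∈ Finset.range β.length, β.getD i 0 = β.sum := by
  induction β with
  | nil => simp
  | cons b γ ih =>
    rw [List.length_cons, Finset.sum_range_succ']
    simp only [List.getD_cons_succ, List.getD_cons_zero, List.sum_cons]
    rw [ih, Nat.add_comm]

theorem stmt5 (n : ℕ) (α : List ℕ) (hstrict : α.Pairwise (· > ·))
    (hpos : ∀ x ∈ α, 0 < x) (hsum : α.sum = n) :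
    ∑ i ∈ Finset.range α.length, i * α.getD i 0 ≤
      (α.map (fun a => a.choose 2)).sum := by
  clear hsum
  induction α with
  | nil => simp
  | cons a β ih =>
    have hIH := ih hstrict.of_cons (fun x hx => hpos x (List.mem_cons_of_mem _ hx))
    have hβa : β.sum ≤ a.choose 2 := by
      refine sum_lt_choose β hstrict.of_cons
        (fun x hx => hpos x (List.mem_cons_of_mem _ hx)) a ?_
      intro x hx
      exact List.rel_of_pairwise_cons hstrict hx
    rw [List.length_cons, Finset.sum_range_succ']
    simp only [List.getD_cons_succ, List.getD_cons_zero, Nat.mul_zero, Nat.add_zero,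
      Nat.zero_mul, List.map_cons, List.sum_cons]
    have : ∑ i ∈ Finset.range β.length, (i + 1) * β.getD i 0
        = (∑ i ∈ Finset.range β.length, i * β.getD i 0) + β.sum := by
      rw [← sum_getD β, ← Finset.sum_add_distrib]
      congr 1; ext i; ring
    rw [this]
    omega
end

section
/- For n ≥ 3, and for each 0 ≤ i ≤ C(n,2), there is exactly one Dyck path π of semilength n with bounce(π) = i and area(π) = C(n,2) − i. -/
/-- A Dyck path of semilength `n`, encoded as a list of steps
(`true` = north, `false` = east), staying weakly above the diagonal. -/
def IsDyck (n : ℕ) (w : List Bool) : Prop :=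
  w.length = 2 * n ∧ w.count true = n ∧
    ∀ k, (w.take k).count false ≤ (w.take k).count true

/-- The area of a Dyck path: the number of whole unit cells between the
path and the diagonal (on each north step, the current number of east
steps is subtracted from the current number of north steps). -/
def area (w : List Bool) : ℕ :=
  (w.foldl
    (fun (p : ℕ × ℕ × ℕ) s =>
      if s then (p.1 + (p.2.1 - p.2.2), p.2.1 + 1, p.2.2)
      else (p.1, p.2.1, p.2.2 + 1)) (0, 0, 0)).1

/-- `hgt w b` is the number of north steps of `w` preceding its `(b+1)`-st
east step, i.e. the height at which the bounce path heading north along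
the line `x = b` meets an east step of `w`. -/
def hgt : List Bool → ℕ → ℕ
  | [], _ => 0
  | true :: w, b => hgt w b + 1
  | false :: _, 0 => 0
  | false :: w, b + 1 => hgt w b

/-- The `i`-th bounce point (a height on the diagonal) of a Dyck path. -/
def bpt (w : List Bool) (i : ℕ) : ℕ := (hgt w)^[i] 0

/-- The bounce statistic of a Dyck path of semilength `n`:
`∑ (n - b_i)` over the successive bounce points `b_i`, `i ≥ 1`
(once the bounce path reaches `n` the terms vanish). -/
def bounce (n : ℕ) (w : List Bool) : ℕ :=
  ∑ i ∈ Finset.range n, (n - bpt w (i + 1))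

/-- The Dyck path `N^{α₁}E^{α₁} ⋯ N^{α_ℓ}E^{α_ℓ}` of a composition `α`. -/
def pComp (α : List ℕ) : List Bool :=
  α.foldr (fun a acc => List.replicate a true ++ List.replicate a false ++ acc) []

/-! ### Auxiliary development -/

section Aux

lemma c2succ (n : ℕ) : (n+1).choose 2 = n.choose 2 + n := by
  rw [show (2:ℕ) = 1 + 1 from rfl, Nat.choose_succ_succ n 1, Nat.choose_one_right,
    Nat.succ_eq_add_one]; omega

lemma c2add (a b : ℕ) : (a+b).choose 2 = a.choose 2 + b.choose 2 + a * b := by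
  induction b with
  | zero => simp
  | succ b ih =>
    rw [show a + (b+1) = a+b+1 by omega, c2succ, ih, c2succ, Nat.mul_succ]; omega

lemma count_fa (w : List Bool) : w.count false + w.count true = w.length := by
  induction w with
  | nil => rfl
  | cons a w ih => cases a <;> simp [List.count_cons] <;> omega

/-! #### `hgt` lemmas -/

lemma hgt_true (w : List Bool) (b : ℕ) : hgt (true :: w) b = hgt w b + 1 := rfl
lemma hgt_false_zero (w : List Bool) : hgt (false :: w) 0 = 0 := rfl
lemma hgt_false_succ (w : List Bool) (b : ℕ) : hgt (false :: w) (b+1) = hgt w b := rfl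

lemma hgt_le (w : List Bool) (b : ℕ) : hgt w b ≤ w.count true := by
  induction w generalizing b with
  | nil => simp [hgt]
  | cons a w ih =>
    cases a with
    | true => simp [hgt_true, List.count_cons]; exact ih b
    | false =>
      cases b with
      | zero => simp [hgt_false_zero]
      | succ b => simp [hgt_false_succ, List.count_cons]; exact le_trans (ih b) (by simp)

lemma hgt_mono (w : List Bool) {b b' : ℕ} (h : b ≤ b') : hgt w b ≤ hgt w b' := by
  induction w generalizing b b' with
  | nil => simp [hgt]
  | cons a w ih =>
    cases a with
    | true => simpa [hgt_true] using ih h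
    | false =>
      cases b with
      | zero => simp [hgt_false_zero]
      | succ b =>
        obtain ⟨b'', rfl⟩ : ∃ c, b' = c + 1 := ⟨b' - 1, by omega⟩
        simpa [hgt_false_succ] using ih (by omega)

lemma hgt_append_lt (x z : List Bool) (b : ℕ) (h : b < x.count false) :
    hgt (x ++ z) b = hgt x b := by
  induction x generalizing b with
  | nil => simp at h
  | cons a x ih =>
    cases a with
    | true => simp only [List.cons_append, hgt_true]
              rw [ih]; simpa using h
    | false =>
      cases b with
      | zero => rfl
      | succ b => simp only [List.cons_append, hgt_false_succ]
                  rw [ih]; simp [List.count_cons] at h; omega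

lemma hgt_append_ge (x z : List Bool) (b : ℕ) (h : x.count false ≤ b) :
    hgt (x ++ z) b = x.count true + hgt z (b - x.count false) := by
  induction x generalizing b with
  | nil => simp
  | cons a x ih =>
    cases a with
    | true =>
      simp only [List.cons_append, hgt_true]
      rw [ih]
      · simp [List.count_cons]; omega
      · simpa using h
    | false =>
      cases b with
      | zero => simp [List.count_cons] at h
      | succ b =>
        simp only [List.cons_append, hgt_false_succ]
        rw [ih]
        · simp [List.count_cons]
        · simp [List.count_cons] at h; omega

lemma hgt_all (u : List Bool) (b : ℕ) (h : u.count false ≤ b) : hgt u b = u.count true := by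
  have := hgt_append_ge u [] b h
  simpa [hgt] using this

lemma hgt_append_false (u : List Bool) (b : ℕ) : hgt (u ++ [false]) b = hgt u b := by
  rcases lt_or_ge b (u.count false) with h | h
  · rw [hgt_append_lt _ _ _ h]
  · rw [hgt_append_ge _ _ _ h, hgt_all u b h]
    rcases Nat.eq_zero_or_pos (b - u.count false) with h2 | h2
    · rw [h2]; simp [hgt]
    · obtain ⟨c, hc⟩ : ∃ c, b - u.count false = c + 1 := ⟨b - u.count false - 1, by omega⟩
      rw [hc]; simp [hgt]

lemma hgt_replicate_true (a : ℕ) (z : List Bool) (b : ℕ) :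
    hgt (List.replicate a true ++ z) b = a + hgt z b := by
  induction a with
  | zero => simp
  | succ a ih =>
    rw [List.replicate_succ, List.cons_append]
    show hgt (List.replicate a true ++ z) b + 1 = _
    rw [ih]; omega

lemma hgt_replicate_false (a : ℕ) (b : ℕ) : hgt (List.replicate a false) b = 0 := by
  have h1 := hgt_le (List.replicate a false) b
  have h2 : (List.replicate a false).count true = 0 := by
    simp [List.count_replicate]
  omega

lemma hgt_ge_slack (w : List Bool) : ∀ b h,
    (∀ k, (w.take k).count false ≤ (w.take k).count true + h) →
    b < w.count false → b + 1 ≤ hgt w b + h := by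
  induction w with
  | nil => intro b h _ hb; simp at hb
  | cons a w ih =>
    intro b h hbal hb
    cases a with
    | true =>
      have h1 : ∀ k, (w.take k).count false ≤ (w.take k).count true + (h+1) := by
        intro k; have := hbal (k+1); simp [List.count_cons] at this; omega
      have h2 : b < w.count false := by simpa [List.count_cons] using hb
      have := ih b (h+1) h1 h2
      show b + 1 ≤ hgt w b + 1 + h; omega
    | false =>
      have hh : 1 ≤ h := by have := hbal 1; simpa [List.count_cons] using this
      cases b with
      | zero => show 1 ≤ 0 + h; omega
      | succ b =>
        have h1 : ∀ k, (w.take k).count false ≤ (w.take k).count true + (h-1) := by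
          intro k; have := hbal (k+1); simp [List.count_cons] at this; omega
        have h2 : b < w.count false := by simp [List.count_cons] at hb; omega
        have := ih b (h-1) h1 h2
        show b + 1 + 1 ≤ hgt w b + h; omega

lemma dyck_count_false {n : ℕ} {w : List Bool} (hw : IsDyck n w) : w.count false = n := by
  obtain ⟨hlen, hct, _⟩ := hw
  have := count_fa w
  omega

lemma hgt_ge {n : ℕ} {w : List Bool} (hw : IsDyck n w) (b : ℕ) (hb : b < n) :
    b + 1 ≤ hgt w b := by
  have hcf := dyck_count_false hw
  have := hgt_ge_slack w b 0 (by intro k; simpa using hw.2.2 k) (by omega)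
  omega

/-! #### `bpt` lemmas -/

lemma bpt_zero (w : List Bool) : bpt w 0 = 0 := rfl

lemma bpt_succ (w : List Bool) (k : ℕ) : bpt w (k+1) = hgt w (bpt w k) :=
  Function.iterate_succ_apply' _ _ _

lemma bpt_le {n : ℕ} {w : List Bool} (hw : IsDyck n w) (k : ℕ) : bpt w k ≤ n := by
  cases k with
  | zero => simp [bpt_zero]
  | succ k => rw [bpt_succ]; exact le_trans (hgt_le _ _) (le_of_eq hw.2.1)

lemma bpt_ge {n : ℕ} {w : List Bool} (hw : IsDyck n w) (k : ℕ) : min k n ≤ bpt w k := by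
  induction k with
  | zero => simp [bpt_zero]
  | succ k ih =>
    rw [bpt_succ]
    rcases lt_or_ge (bpt w k) n with h | h
    · have := hgt_ge hw (bpt w k) h
      have h2 : min k n ≤ bpt w k := ih
      omega
    · have hbk : bpt w k = n := le_antisymm (bpt_le hw k) h
      rw [hbk, hgt_all w n (le_of_eq (dyck_count_false hw)), hw.2.1]
      omega

lemma bpt_eq_n {n : ℕ} {w : List Bool} (hw : IsDyck n w) {k : ℕ} (hk : n ≤ k) :
    bpt w k = n := by
  have h1 := bpt_le hw k
  have h2 := bpt_ge hw k
  omega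

/-! #### `ar` : a structural description of the area -/

def ar (t f : ℕ) : List Bool → ℕ
  | [] => 0
  | true :: w => (t - f) + ar (t+1) f w
  | false :: w => ar t (f+1) w

lemma area_foldl (w : List Bool) : ∀ acc t f,
    (w.foldl (fun (p : ℕ × ℕ × ℕ) s =>
      if s then (p.1 + (p.2.1 - p.2.2), p.2.1 + 1, p.2.2)
      else (p.1, p.2.1, p.2.2 + 1)) (acc, t, f)).1 = acc + ar t f w := by
  induction w with
  | nil => intro acc t f; rfl
  | cons a w ih =>
    intro acc t f
    cases a with
    | true => simp only [List.foldl_cons, if_true]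
              rw [ih]; show _ = acc + ((t-f) + ar (t+1) f w); omega
    | false => simp only [List.foldl_cons, if_false]
               rw [ih]; rfl

lemma area_eq_ar (w : List Bool) : area w = ar 0 0 w := by
  unfold area; rw [area_foldl]; omega

lemma ar_shift (c : ℕ) (w : List Bool) : ∀ t f, ar (t+c) (f+c) w = ar t f w := by
  induction w with
  | nil => intro t f; rfl
  | cons a w ih =>
    intro t f
    cases a with
    | true => show (t+c) - (f+c) + ar (t+c+1) (f+c) w = (t - f) + ar (t+1) f w
              rw [Nat.add_sub_add_right, show t+c+1 = t+1+c by omega, ih (t+1) f]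
    | false => show ar (t+c) (f+c+1) w = ar t (f+1) w
               rw [show f+c+1 = (f+1)+c by omega, ih t (f+1)]

lemma ar_append (x y : List Bool) : ∀ t f,
    ar t f (x ++ y) = ar t f x + ar (t + x.count true) (f + x.count false) y := by
  induction x with
  | nil => simp [ar]
  | cons a x ih =>
    intro t f
    cases a with
    | true =>
      show (t-f) + ar (t+1) f (x ++ y) = (t-f) + ar (t+1) f x + _
      rw [ih (t+1) f]; simp [List.count_cons]; ring_nf
    | false =>
      show ar t (f+1) (x ++ y) = ar t (f+1) x + _
      rw [ih t (f+1)]; simp [List.count_cons]; ring_nf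

lemma ar_ballot (x : List Bool) : ∀ t f, f ≤ t →
    (∀ k, f + (x.take k).count false ≤ t + (x.take k).count true) →
    ar (t+1) f x = ar t f x + x.count true := by
  induction x with
  | nil => intro t f _ _; rfl
  | cons a x ih =>
    intro t f hf hbal
    cases a with
    | true =>
      show (t+1-f) + ar (t+2) f x = (t-f) + ar (t+1) f x + _
      have h1 : ∀ k, f + (x.take k).count false ≤ (t+1) + (x.take k).count true := by
        intro k; have := hbal (k+1); simp [List.count_cons] at this; omega
      rw [ih (t+1) f (by omega) h1]
      simp [List.count_cons]; omega
    | false =>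
      show ar (t+1) (f+1) x = ar t (f+1) x + _
      have hf1 : f + 1 ≤ t := by
        have := hbal 1; simp [List.count_cons] at this; omega
      have h1 : ∀ k, (f+1) + (x.take k).count false ≤ t + (x.take k).count true := by
        intro k; have := hbal (k+1); simp [List.count_cons] at this; omega
      rw [ih t (f+1) hf1 h1]
      simp [List.count_cons]

lemma ar_replicate_true (z : List Bool) : ∀ (a t f : ℕ), f ≤ t →
    ar t f (List.replicate a true ++ z) = a * (t - f) + a.choose 2 + ar (t+a) f z := by
  intro a
  induction a with
  | zero => intro t f _; simp
  | succ a ih =>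
    intro t f hf
    rw [List.replicate_succ, List.cons_append]
    show (t - f) + ar (t+1) f (List.replicate a true ++ z) = _
    rw [ih (t+1) f (by omega)]
    have h1 : t + 1 - f = (t - f) + 1 := by omega
    rw [h1, c2succ, Nat.mul_succ, Nat.succ_mul,
      show t + 1 + a = t + (a+1) by omega]
    omega

lemma ar_replicate_false (a : ℕ) : ∀ t f, ar t f (List.replicate a false) = 0 := by
  induction a with
  | zero => intro t f; rfl
  | succ a ih => intro t f; rw [List.replicate_succ]; exact ih t (f+1)

end Aux

section Aux2

lemma split_lemma (v : List Bool) : ∀ h : ℕ,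
    v.count true + h + 1 ≤ v.count false →
    (∀ k, (v.take k).count false ≤ (v.take k).count true + h + 1) →
    ∃ x y, v = x ++ false :: y ∧
      (∀ k, (x.take k).count false ≤ (x.take k).count true + h) ∧
      x.count false = x.count true + h := by
  induction v with
  | nil => intro h h1 _; simp at h1
  | cons a v ih =>
    intro h h1 hbal
    cases a with
    | false =>
      cases h with
      | zero =>
        exact ⟨[], v, rfl, by intro k; simp, by simp⟩
      | succ h' =>
        obtain ⟨x, y, hxy, hx1, hx2⟩ := ih h' (by simp [List.count_cons] at h1; omega)
          (by intro k; have := hbal (k+1); simp [List.count_cons] at this; omega)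
        refine ⟨false :: x, y, by rw [hxy]; rfl, ?_, by simp [List.count_cons]; omega⟩
        intro k
        cases k with
        | zero => simp
        | succ k => have := hx1 k; simp [List.count_cons]; omega
    | true =>
      obtain ⟨x, y, hxy, hx1, hx2⟩ := ih (h+1) (by simp [List.count_cons] at h1; omega)
        (by intro k; have := hbal (k+1); simp [List.count_cons] at this; omega)
      refine ⟨true :: x, y, by rw [hxy]; rfl, ?_, by simp [List.count_cons]; omega⟩
      intro k
      cases k with
      | zero => simp
      | succ k => have := hx1 k; simp [List.count_cons]; omega

/-! #### balance ("stays above diagonal") helper lemmas -/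

lemma bal_cons_true (z : List Bool) (h : ℕ)
    (hz : ∀ k, (z.take k).count false ≤ (z.take k).count true + (h+1)) :
    ∀ k, ((true :: z).take k).count false ≤ ((true :: z).take k).count true + h := by
  intro k
  cases k with
  | zero => simp
  | succ k => have := hz k; simp [List.count_cons]; omega

lemma bal_cons_false (z : List Bool) (h : ℕ) (hh : 1 ≤ h)
    (hz : ∀ k, (z.take k).count false ≤ (z.take k).count true + (h-1)) :
    ∀ k, ((false :: z).take k).count false ≤ ((false :: z).take k).count true + h := by
  intro k
  cases k with
  | zero => simp
  | succ k => have := hz k; simp [List.count_cons]; omega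

lemma bal_replicate_true (z : List Bool) : ∀ (a h : ℕ),
    (∀ k, (z.take k).count false ≤ (z.take k).count true + (h+a)) →
    ∀ k, ((List.replicate a true ++ z).take k).count false ≤
      ((List.replicate a true ++ z).take k).count true + h := by
  intro a
  induction a with
  | zero => intro h hz k; simpa using hz k
  | succ a ih =>
    intro h hz k
    rw [List.replicate_succ, List.cons_append]
    exact bal_cons_true _ h (fun k => by
      have := ih (h+1) (by intro k'; have := hz k'; convert this using 2; omega) k
      exact this) k

lemma bal_replicate_false (a h : ℕ) (hh : a ≤ h) :
    ∀ k, ((List.replicate a false).take k).count false ≤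
      ((List.replicate a false).take k).count true + h := by
  intro k
  rw [List.take_replicate]
  simp [List.count_replicate]
  omega

/-! #### prepending a `NE` pair -/

lemma dyck_cons2 {n : ℕ} {v : List Bool} (h : IsDyck n v) :
    IsDyck (n+1) (true :: false :: v) := by
  obtain ⟨hlen, hct, hbal⟩ := h
  refine ⟨by simp [hlen]; omega, by simp [List.count_cons, hct], ?_⟩
  intro k
  match k with
  | 0 => simp
  | 1 => simp
  | (k+2) =>
    have := hbal k
    simp [List.count_cons]
    omega

lemma dyck_of_cons2 {n : ℕ} {v : List Bool} (h : IsDyck (n+1) (true :: false :: v)) :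
    IsDyck n v := by
  obtain ⟨hlen, hct, hbal⟩ := h
  refine ⟨by simp at hlen; omega, by simp [List.count_cons] at hct; omega, ?_⟩
  intro k
  have := hbal (k+2)
  simp [List.count_cons] at this
  omega

lemma area_cons2 (v : List Bool) : area (true :: false :: v) = area v := by
  rw [area_eq_ar, area_eq_ar]
  show (0 - 0) + ar 1 1 v = ar 0 0 v
  have := ar_shift 1 v 0 0
  simpa using this

lemma hgt_cons2_zero (v : List Bool) : hgt (true :: false :: v) 0 = 1 := rfl

lemma hgt_cons2_succ (v : List Bool) (b : ℕ) :
    hgt (true :: false :: v) (b+1) = hgt v b + 1 := rfl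

lemma bpt_cons2 (v : List Bool) : ∀ k, bpt (true :: false :: v) (k+1) = bpt v k + 1 := by
  intro k
  induction k with
  | zero => rw [bpt_succ]; rfl
  | succ k ih =>
    rw [bpt_succ, ih, hgt_cons2_succ, ← bpt_succ]

lemma bounce_cons2 (n : ℕ) (v : List Bool) :
    bounce (n+1) (true :: false :: v) = n + bounce n v := by
  unfold bounce
  have h1 : ∀ i, (n+1) - bpt (true :: false :: v) (i+1) = n - bpt v i := by
    intro i; rw [bpt_cons2]; omega
  rw [Finset.sum_congr rfl (fun i _ => h1 i), Finset.sum_range_succ' (fun i => n - bpt v i) n]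
  simp [bpt_zero]
  omega

end Aux2

/-! ### The extremal paths -/

def ff : ℕ → ℕ → List Bool
  | 0, _ => []
  | n+1, i =>
    if n ≤ i then true :: false :: ff n (i - n)
    else List.replicate (n+1-i) true ++
      false :: (List.replicate i true ++ List.replicate (n : ℕ) false)

section FF

lemma ff_spec : ∀ n i, i ≤ n.choose 2 →
    IsDyck n (ff n i) ∧ bounce n (ff n i) = i ∧ area (ff n i) = n.choose 2 - i := by
  intro n
  induction n with
  | zero =>
    intro i hi
    simp [Nat.choose] at hi
    subst hi
    have hff : ff 0 0 = [] := rfl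
    rw [hff]
    refine ⟨⟨rfl, rfl, by intro k; simp⟩, by simp [bounce], by simp [area]⟩
  | succ n ih =>
    intro i hi
    rw [c2succ] at hi
    by_cases hni : n ≤ i
    · -- ff (n+1) i = true :: false :: ff n (i-n)
      have hi' : i - n ≤ n.choose 2 := by omega
      obtain ⟨hd, hb, ha⟩ := ih (i-n) hi'
      rw [show ff (n+1) i = true :: false :: ff n (i - n) by rw [ff]; simp [hni]]
      refine ⟨dyck_cons2 hd, ?_, ?_⟩
      · rw [bounce_cons2, hb]; omega
      · rw [area_cons2, ha, c2succ]; omega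
    · -- explicit staircase-free path
      push_neg at hni
      set a := n + 1 - i with ha
      have ha1 : 2 ≤ a := by omega
      have hai : a + i = n + 1 := by omega
      set z := List.replicate i true ++ List.replicate n false with hz
      set w := List.replicate a true ++ false :: z with hw
      have hwf : ff (n+1) i = w := by rw [ff]; simp [Nat.not_le.mpr hni, ← ha, hw, hz]
      rw [hwf]
      have hcz_t : z.count true = i := by simp [hz, List.count_replicate]
      have hcz_f : z.count false = n := by simp [hz, List.count_replicate]
      have hct : w.count true = n + 1 := by
        simp [hw, List.count_cons, List.count_replicate, hcz_t] <;> omega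
      have hcf : w.count false = n + 1 := by
        simp [hw, List.count_cons, List.count_replicate, hcz_f] <;> omega
      have hlen : w.length = 2 * (n+1) := by
        have := count_fa w; omega
      have hbal : ∀ k, (w.take k).count false ≤ (w.take k).count true := by
        have hz_bal : ∀ k, (z.take k).count false ≤ (z.take k).count true + (a - 1) :=
          bal_replicate_true (List.replicate n false) i (a-1)
            (fun k' => by have := bal_replicate_false n ((a-1)+i) (by omega) k'; omega)
        have hfz : ∀ k, ((false :: z).take k).count false ≤
            ((false :: z).take k).count true + a :=
          bal_cons_false z a (by omega) (fun k => by have := hz_bal k; omega)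
        have hb0 := bal_replicate_true (false :: z) a 0
          (fun k => by have := hfz k; omega)
        intro k
        have h := hb0 k
        rw [← hw] at h
        omega
      have hdyck : IsDyck (n+1) w := ⟨hlen, hct, hbal⟩
      refine ⟨hdyck, ?_, ?_⟩
      · -- bounce
        have hg0 : hgt w 0 = a := by
          rw [hw, hgt_replicate_true, hgt_false_zero]
          omega
        have hgs : ∀ b, 1 ≤ b → hgt w b = n + 1 := by
          intro b hb
          obtain ⟨b', rfl⟩ : ∃ b', b = b' + 1 := ⟨b - 1, by omega⟩
          rw [hw, hgt_replicate_true, hgt_false_succ, hz, hgt_replicate_true,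
            hgt_replicate_false]
          omega
        have hb1 : bpt w 1 = a := by rw [bpt_succ, bpt_zero, hg0]
        have hbk : ∀ k, bpt w (k+2) = n+1 := by
          intro k
          induction k with
          | zero =>
            rw [bpt_succ, hb1]
            exact hgs a (by omega)
          | succ k ihk =>
            rw [bpt_succ, ihk]
            exact hgs (n+1) (by omega)
        unfold bounce
        rw [Finset.sum_range_succ' (fun i => (n+1) - bpt w (i+1)) n]
        have : ∀ j ∈ Finset.range n, (n+1) - bpt w (j+1+1) = 0 := by
          intro j _; rw [hbk j]; omega
        rw [Finset.sum_congr rfl this]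
        simp [hb1]
        omega
      · -- area
        rw [area_eq_ar, hw, ar_replicate_true _ _ _ _ (by omega)]
        show _ + ar (0+a) 1 z = _
        rw [hz, ar_replicate_true _ _ _ _ (by omega), ar_replicate_false]
        simp
        have e1 : (0:ℕ) + a - 1 = a - 1 := by omega
        have e2 : (n+1).choose 2 = a.choose 2 + i.choose 2 + a * i := by
          rw [← hai, c2add]
        have e3 : i * (a - 1) + i = a * i := by
          obtain ⟨a', ha'⟩ : ∃ a', a = a' + 1 := ⟨a - 1, by omega⟩
          rw [ha', Nat.add_sub_cancel, Nat.succ_mul]; ring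
        omega

end FF

section Shape

lemma ar_cons_true (t f : ℕ) (z : List Bool) : ar t f (true :: z) = (t - f) + ar (t+1) f z := rfl
lemma ar_cons_false (t f : ℕ) (z : List Bool) : ar t f (false :: z) = ar t (f+1) z := rfl

lemma ff_hgt0_pos (M j : ℕ) (hM : 1 ≤ M) : 1 ≤ hgt (ff M j) 0 := by
  obtain ⟨M', rfl⟩ : ∃ M', M = M' + 1 := ⟨M - 1, by omega⟩
  rw [ff]
  by_cases h : M' ≤ j
  · simp [h, hgt_cons2_zero]
  · simp only [h, if_false]
    rw [hgt_replicate_true, hgt_false_zero]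
    omega

lemma hu_lemma (M j : ℕ) (hj : j ≤ M.choose 2)
    (h : hgt (ff M j) 1 = hgt (ff M j) 0) : j = 0 := by
  rcases M with _ | M'
  · simpa using hj
  · rw [ff] at h
    by_cases hMj : M' ≤ j
    · simp only [hMj, if_true] at h
      rw [hgt_cons2_zero, show (1:ℕ) = 0 + 1 from rfl, hgt_cons2_succ] at h
      have h0 : hgt (ff M' (j - M')) 0 = 0 := by omega
      rcases Nat.eq_zero_or_pos M' with hM0 | hM0
      · subst hM0; rw [c2succ] at hj; simpa using hj
      · have := ff_hgt0_pos M' (j - M') hM0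
        omega
    · simp only [hMj, if_false] at h
      have hR : hgt (List.replicate (M'+1-j) true ++
          false :: (List.replicate j true ++ List.replicate M' false)) 0 = M'+1-j := by
        rw [hgt_replicate_true, hgt_false_zero]; omega
      have hL : hgt (false :: (List.replicate j true ++ List.replicate M' false)) 1 = j := by
        rw [show (1:ℕ) = 0 + 1 from rfl, hgt_false_succ, hgt_replicate_true,
          hgt_replicate_false]; omega
      rw [hR, hgt_replicate_true, hL] at h
      omega

lemma ff_zero_app (N : ℕ) :
    ff N 0 ++ [false] = List.replicate N true ++ List.replicate (N+1) false := by
  rcases N with _ | N'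
  · rfl
  · rcases N' with _ | N''
    · rfl
    · rw [ff]
      simp only [Nat.le_zero, Nat.succ_ne_zero, if_false]
      rw [Nat.sub_zero, List.replicate_zero, List.nil_append]
      rw [List.append_assoc]
      congr 1
      show (false :: List.replicate (N''+1) false) ++ [false] = List.replicate (N''+3) false
      rw [show N''+3 = (N''+2)+1 by omega, List.replicate_succ' (n := N''+2) (a := false),
        show (N''+2) = (N''+1)+1 by omega, List.replicate_succ (a := false) (n := N''+1)]

end Shape

section Master

lemma master : ∀ n w, IsDyck n w → area w + bounce n w ≤ n.choose 2 ∧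
    (area w + bounce n w = n.choose 2 → w = ff n (bounce n w)) := by
  intro n
  induction n using Nat.strong_induction_on with
  | _ n ih =>
  intro w hw
  rcases n with _ | n'
  · -- n = 0
    have hw0 : w = [] := List.eq_nil_of_length_eq_zero (by have := hw.1; omega)
    subst hw0
    have hb : bounce 0 [] = 0 := by simp [bounce]
    have ha : area [] = 0 := by simp [area]
    rw [hb, ha]
    exact ⟨by simp, fun _ => rfl⟩
  · -- n = n' + 1
    -- first step is north
    rcases w with _ | ⟨c, v0⟩
    · exfalso; have := hw.1; simp at this
    have hc : c = true := by
      have := hw.2.2 1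
      cases c
      · simp at this
      · rfl
    subst hc
    rcases v0 with _ | ⟨c2, v1⟩
    · exfalso; have := hw.1; simp at this; omega
    cases c2 with
    | false =>
      -- Case (i) : w = NE v
      have hv : IsDyck n' v1 := dyck_of_cons2 hw
      obtain ⟨ihle, iheq⟩ := ih n' (by omega) v1 hv
      have harea : area (true :: false :: v1) = area v1 := area_cons2 v1
      have hbounce : bounce (n'+1) (true :: false :: v1) = n' + bounce n' v1 :=
        bounce_cons2 n' v1
      rw [harea, hbounce, c2succ]
      constructor
      · omega
      · intro heq
        have hveq : area v1 + bounce n' v1 = n'.choose 2 := by omega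
        have hv1 := iheq hveq
        rw [ff]
        simp only [show n' ≤ n' + bounce n' v1 by omega, if_true,
          show n' + bounce n' v1 - n' = bounce n' v1 by omega]
        rw [← hv1]
    | true =>
      -- Case (ii) : w starts with two norths
      set n := n' + 1 with hn
      have hct : (true :: true :: v1).count true = n := hw.2.1
      have hcf : (true :: true :: v1).count false = n := dyck_count_false hw
      -- split the tail at the first return to the diagonal
      obtain ⟨x, y, hv0, hxbal, hxc⟩ := split_lemma (true :: v1) 0
        (by simp [List.count_cons] at hct hcf ⊢; omega)
        (by
          intro k
          have := hw.2.2 (k+1)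
          simp [List.count_cons] at this ⊢
          omega)
      simp only [Nat.add_zero] at hxc
      -- x is nonempty and starts with a north step
      have hxne : x ≠ [] := by
        intro hx0
        rw [hx0] at hv0
        simp at hv0
      have hxhead : ∃ x', x = true :: x' := by
        rcases x with _ | ⟨x0, x'⟩
        · exact absurd rfl hxne
        · rcases x0 with _ | _
          · simp at hv0
          · exact ⟨x', rfl⟩
      have hcx1 : 1 ≤ x.count true := by
        obtain ⟨x', rfl⟩ := hxhead
        simp [List.count_cons]
      set c := x.count true with hc
      have hw_form : (true :: true :: v1 : List Bool) = true :: (x ++ false :: y) := by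
        rw [← hv0]
      -- counts in x and y
      have hcxy : x.count true + y.count true + 1 = n ∧ x.count false + y.count false + 1 = n := by
        constructor
        · have : (true :: (x ++ false :: y)).count true = n := by rw [← hw_form]; exact hct
          simp [List.count_cons, List.count_append] at this; omega
        · have : (true :: (x ++ false :: y)).count false = n := by rw [← hw_form]; exact hcf
          simp [List.count_cons, List.count_append] at this; omega
      have hcy_t : y.count true = n' - c := by omega
      have hcy_f : y.count false = n' - c := by omega
      have hcn : c ≤ n' := by omega
      -- y satisfies the prefix condition
      have hybal : ∀ j, (y.take j).count false ≤ (y.take j).count true := by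
        intro j
        have hA : (true :: true :: v1 : List Bool) = (true :: x ++ [false]) ++ y := by
          rw [hw_form]; simp
        have := hw.2.2 ((true :: x ++ [false]).length + j)
        rw [hA, List.take_length_add_append j] at this
        simp [List.count_append, List.count_cons] at this
        omega
      -- w' = x ++ y is a Dyck path of semilength n'
      have hw'bal : ∀ k, ((x ++ y).take k).count false ≤ ((x ++ y).take k).count true := by
        intro k
        rw [List.take_append]
        simp only [List.count_append]
        have h1 := hxbal k
        have h2 := hybal (k - x.length)
        omega
      have hw'ct : (x ++ y).count true = n' := by
        simp [List.count_append]; omega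
      have hw'cf : (x ++ y).count false = n' := by
        simp [List.count_append]; omega
      have hw'len : (x ++ y).length = 2 * n' := by
        have := count_fa (x ++ y); omega
      have hw' : IsDyck n' (x ++ y) := ⟨hw'len, hw'ct, hw'bal⟩
      obtain ⟨ihle, iheq⟩ := ih n' (by omega) (x ++ y) hw'
      -- area relation
      have hxbal' : ∀ k, 0 + (x.take k).count false ≤ 0 + (x.take k).count true := by
        intro k; have := hxbal k; omega
      have e_w : area (true :: true :: v1) = ar 0 0 x + c + ar 0 0 y := by
        rw [hw_form, area_eq_ar, ar_cons_true, ar_append, ar_cons_false]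
        have hb := ar_ballot x 0 0 le_rfl hxbal'
        norm_num at hb ⊢
        rw [hb]
        have hsh := ar_shift (c+1) y 0 0
        norm_num at hsh
        rw [show 1 + x.count true = c + 1 by omega, show x.count false + 1 = c + 1 by omega, hsh]
        try omega
      have e_w' : area (x ++ y) = ar 0 0 x + ar 0 0 y := by
        rw [area_eq_ar, ar_append]
        have hsh := ar_shift c y 0 0
        norm_num at hsh
        rw [show (0:ℕ) + x.count true = c by omega, show (0:ℕ) + x.count false = c by omega, hsh]
      have harea : area (true :: true :: v1) = area (x ++ y) + c := by
        rw [e_w, e_w']; omega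
      -- hgt comparison
      have hcxf : 0 < x.count false := by omega
      have hF3 : hgt (true :: true :: v1) 0 = hgt (x ++ y) 0 + 1 := by
        rw [hw_form, hgt_true, hgt_append_lt x (false :: y) 0 hcxf, hgt_append_lt x y 0 hcxf]
      have hF4 : ∀ b, hgt (x ++ y) b + 1 ≤ hgt (true :: true :: v1) (b+1) := by
        intro b
        rw [hw_form, hgt_true]
        rcases lt_or_ge b (x.count false) with hb | hb
        · rcases lt_or_ge (b+1) (x.count false) with hb1 | hb1
          · rw [hgt_append_lt x y b hb, hgt_append_lt x (false :: y) (b+1) hb1]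
            have := hgt_mono x (show b ≤ b + 1 by omega)
            omega
          · rw [hgt_append_lt x y b hb, hgt_append_ge x (false :: y) (b+1) hb1]
            have := hgt_le x b
            omega
        · rw [hgt_append_ge x y b hb, hgt_append_ge x (false :: y) (b+1) (by omega)]
          rw [show b + 1 - x.count false = (b - x.count false) + 1 by omega, hgt_false_succ]
          try omega
      have hF5 : ∀ k, bpt (x ++ y) (k+1) + 1 ≤ bpt (true :: true :: v1) (k+1) := by
        intro k
        induction k with
        | zero => rw [bpt_succ, bpt_succ, bpt_zero, bpt_zero, hF3]
        | succ k ihk =>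
          rw [bpt_succ (x ++ y) (k+1), bpt_succ (true :: true :: v1) (k+1)]
          calc hgt (x ++ y) (bpt (x ++ y) (k+1)) + 1
              ≤ hgt (true :: true :: v1) (bpt (x ++ y) (k+1) + 1) := hF4 _
            _ ≤ hgt (true :: true :: v1) (bpt (true :: true :: v1) (k+1)) :=
                hgt_mono _ ihk
      -- bounce comparison
      have hterm : ∀ j ∈ Finset.range n, (n - bpt (true :: true :: v1) (j+1)) ≤
          (n' - bpt (x ++ y) (j+1)) := by
        intro j _
        have := hF5 j
        omega
      have hsum1 : ∑ j ∈ Finset.range n, (n' - bpt (x ++ y) (j+1)) = bounce n' (x ++ y) := by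
        rw [hn, Finset.sum_range_succ]
        have hlast : n' - bpt (x ++ y) (n'+1) = 0 := by
          have := bpt_ge hw' (n'+1)
          omega
        rw [hlast]
        simp [bounce]
      have hble : bounce n (true :: true :: v1) ≤ bounce n' (x ++ y) := by
        rw [← hsum1]
        exact Finset.sum_le_sum hterm
      -- the inequality
      have hCsucc : n.choose 2 = n'.choose 2 + n' := by rw [hn, c2succ]
      constructor
      · rw [harea]; omega
      · -- the equality analysis
        intro heq
        have hceq : c = n' := by omega
        have hw'eq : area (x ++ y) + bounce n' (x ++ y) = n'.choose 2 := by omega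
        have hbeq : bounce n (true :: true :: v1) = bounce n' (x ++ y) := by omega
        -- y is empty
        have hy : y = [] := by
          have hylen : y.length = 0 := by
            have := count_fa y
            omega
          exact List.eq_nil_of_length_eq_zero hylen
        subst hy
        rw [List.append_nil] at *
        -- x is extremal
        have hxff := iheq hw'eq
        set i' := bounce n' x with hi'
        have hi'le : i' ≤ n'.choose 2 := by omega
        -- termwise equality of the bounce sums
        have hsums : ∑ j ∈ Finset.range n, (n - bpt (true :: true :: v1) (j+1)) =
            ∑ j ∈ Finset.range n, (n' - bpt x (j+1)) := by
          rw [hsum1]; exact hbeq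
        have htermeq : ∀ j ∈ Finset.range n, (n - bpt (true :: true :: v1) (j+1)) =
            (n' - bpt x (j+1)) := (Finset.sum_eq_sum_iff_of_le hterm).mp hsums
        have hn'1 : 1 ≤ n' := by omega
        have hb2 : bpt (true :: true :: v1) 2 = bpt x 2 + 1 := by
          have h1 := htermeq 1 (by rw [Finset.mem_range]; omega)
          have h2 := hF5 1
          have h3 : bpt (true :: true :: v1) 2 ≤ n := bpt_le hw 2
          have h4 : bpt x 2 ≤ n' := bpt_le hw' 2
          norm_num at h1 h2
          omega
        -- shape analysis
        obtain ⟨N, hN⟩ : ∃ N, n' = N + 1 := ⟨n' - 1, by omega⟩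
        rw [hbeq]
        by_cases hshp : N ≤ i'
        · -- x = NE u with u = ff N (i' - N)
          have hxTF : x = true :: false :: ff N (i' - N) := by
            rw [hxff, hN, ff]
            simp [hshp]
          set u := ff N (i' - N) with hu
          -- compute the second bounce points
          have hbx2 : bpt x 2 = hgt u 0 + 1 := by
            rw [bpt_succ, bpt_succ, bpt_zero, hxTF, hgt_cons2_zero,
              show (1:ℕ) = 0 + 1 from rfl, hgt_cons2_succ]
          have hbw2 : bpt (true :: true :: v1) 2 = hgt u 1 + 2 := by
            have hbw1 : bpt (true :: true :: v1) 1 = 2 := by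
              rw [bpt_succ, bpt_zero, hF3, hxTF, hgt_cons2_zero]
            rw [bpt_succ, hbw1, hw_form, hgt_true, hgt_append_false,
              hxTF, show (2:ℕ) = 1 + 1 from rfl, hgt_cons2_succ]
          have hgu : hgt u 1 = hgt u 0 := by omega
          have hiN : i' - N ≤ N.choose 2 := by
            rw [hN, c2succ] at hi'le; omega
          have hi'N : i' = N := by
            have := hu_lemma N (i' - N) hiN (by rw [← hu] at *; exact hgu)
            omega
          -- conclude
          have hwx : (true :: true :: v1 : List Bool) =
              true :: true :: false :: (u ++ [false]) := by
            rw [hw_form, hxTF]; rfl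
          rw [hwx, hi'N, hn, hN, ff]
          simp only [show ¬(N + 1 ≤ N) by omega, if_false]
          rw [show N + 1 + 1 - N = 2 by omega]
          rw [hu, show i' - N = 0 by omega, ff_zero_app]
          rfl
        · -- x is the one-dent staircase-free path
          have hxE : x = List.replicate (N+1-i') true ++
              false :: (List.replicate i' true ++ List.replicate N false) := by
            rw [hxff, hN, ff]
            simp [hshp]
          have hwE : (true :: true :: v1 : List Bool) =
              List.replicate (N+2-i') true ++
              false :: (List.replicate i' true ++ List.replicate (N+1) false) := by
            rw [hw_form, hxE, show N+2-i' = (N+1-i')+1 by omega, List.replicate_succ,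
              List.replicate_succ' (n := N) (a := false)]
            simp
          rw [hwE, hn, hN, ff]
          simp only [show ¬(N + 1 ≤ i') by omega, if_false]

end Master

theorem stmt12 (n : ℕ) (hn : 3 ≤ n) (i : ℕ) (hi : i ≤ n.choose 2) :
    ∃! w : List Bool, IsDyck n w ∧ bounce n w = i ∧ area w = n.choose 2 - i := by
  obtain ⟨hd, hb, ha⟩ := ff_spec n i hi
  refine ⟨ff n i, ⟨hd, hb, ha⟩, ?_⟩
  rintro w ⟨hd', hb', ha'⟩
  have heq : area w + bounce n w = n.choose 2 := by rw [hb', ha']; omega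
  have := (master n w hd').2 heq
  rw [this, hb']
end
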